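/- arXiv:2602.04086 — 4 statements merged into one kernel-verified Lean document; each statement's English description precedes it below -/
import Mathlib

section
/- Let c > 0 and x ∈ ℝ, and set R = √((x − log c)² + π²). Then the complex function g(w) = (1 + c·exp(−w))⁻¹ is analytic (holomorphic) on the open ball in ℂ centered at x of radius R. -/
theorem analytic_on_ball_of_radius_to_pole
    (c : ℝ) (hc : 0 < c) (x : ℝ)
    (R : ℝ) (hR : R = Real.sqrt ((x - Real.log c) ^ 2 + Real.pi ^ 2)) :
    AnalyticOnNhd ℂ (fun w : ℂ => (1 + (c : ℂ) * Complex.exp (-w))⁻¹)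
      (Metric.ball (x : ℂ) R) := by
  intro w hw
  have hden : AnalyticAt ℂ (fun w : ℂ => 1 + (c : ℂ) * Complex.exp (-w)) w :=
    analyticAt_const.add (analyticAt_const.mul
      (analyticAt_cexp.comp (analyticAt_id.neg)))
  refine hden.inv ?_
  intro h0
  -- from 1 + c exp(-w) = 0 get exp(-w) = exp(-(log c) + π I)
  have hc0 : (c : ℂ) ≠ 0 := by exact_mod_cast hc.ne'
  have hexp : Complex.exp (-w) = Complex.exp (-(Real.log c : ℂ) + Real.pi * Complex.I) := by
    rw [Complex.exp_add, Complex.exp_pi_mul_I]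
    have : Complex.exp (-(Real.log c : ℂ)) = (c : ℂ)⁻¹ := by
      rw [Complex.exp_neg]
      congr 1
      rw [← Complex.ofReal_exp, Real.exp_log hc]
    rw [this]
    have : (c : ℂ) * Complex.exp (-w) = -1 := by linear_combination h0
    field_simp
    linear_combination this
  rw [Complex.exp_eq_exp_iff_exists_int] at hexp
  obtain ⟨n, hn⟩ := hexp
  have hre : w.re = Real.log c := by
    have := congrArg Complex.re hn
    simp [Complex.add_re, Complex.mul_re, Complex.I_re, Complex.I_im] at this
    linarith
  have him : w.im = -(Real.pi + n * (2 * Real.pi)) := by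
    have := congrArg Complex.im hn
    simp [Complex.add_im, Complex.mul_im, Complex.I_re, Complex.I_im] at this
    push_cast at this ⊢
    linarith
  -- distance estimate
  have hdist : dist w (x : ℂ) < R := Metric.mem_ball.mp hw
  have habs : dist w (x : ℂ) = Real.sqrt ((w.re - x) ^ 2 + w.im ^ 2) := by
    rw [Complex.dist_eq, Complex.norm_def, Complex.normSq_apply]
    simp [Complex.sub_re, Complex.sub_im, Complex.ofReal_re, Complex.ofReal_im]
    ring_nf
  have him2 : Real.pi ^ 2 ≤ w.im ^ 2 := by
    rw [him]
    have hpi := Real.pi_pos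
    have h1 : (1 : ℝ) ≤ ((2 * n + 1 : ℤ) : ℝ) ^ 2 := by
      have hodd : (2 * n + 1 : ℤ) ≠ 0 := by omega
      have habs1 : 1 ≤ |(2 * n + 1 : ℤ)| := Int.one_le_abs hodd
      have : (1 : ℤ) ≤ (2 * n + 1) ^ 2 := by nlinarith [sq_abs (2 * n + 1 : ℤ)]
      exact_mod_cast this
    have : (-(Real.pi + n * (2 * Real.pi))) ^ 2 = ((2 * n + 1 : ℤ) : ℝ) ^ 2 * Real.pi ^ 2 := by
      push_cast; ring
    rw [this]
    nlinarith [sq_nonneg Real.pi]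
  have hge : R ≤ dist w (x : ℂ) := by
    rw [habs, hR]
    apply Real.sqrt_le_sqrt
    rw [hre]
    nlinarith [him2]
  linarith
end

section
/- Let E be a complete real normed vector space, let A : E → E be a continuous linear map, and let u : ℝ → E be differentiable with u′(t) = A(u(t)) for all t ∈ ℝ. Then for every p ∈ ℕ, every t ∈ ℝ and every h ∈ ℝ, the error of the degree-p Taylor step satisfies ‖u(t + h) − ∑_{k=0}^{p} (h^k / k!)·A^k(u(t))‖ ≤ ‖u(t)‖ · ‖A‖^{p+1} · |h|^{p+1} / (p+1)! · exp(|h|·‖A‖). -/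
/-!
Linear ODE solutions are unique, so `u (t + h) = exp (h • A) (u t)` and the Taylor error is the
tail `∑_{k > p} (h • A)^k / k!` of the exponential series applied to `u t`. Since
`(p + 1 + k)! ≥ (p + 1)! k!`, that tail is bounded termwise by `‖h • A‖^(p+1) / (p+1)!` times the
series of `exp ‖h • A‖`.
-/

open NormedSpace Nat

theorem apply_add_eq_exp_smul_apply_of_hasDerivAt
    {E : Type*} [NormedAddCommGroup E] [NormedSpace ℝ E] [CompleteSpace E]
    (A : E →L[ℝ] E) {u : ℝ → E} (hu : ∀ t, HasDerivAt u (A (u t)) t) (t h : ℝ) :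
    u (t + h) = exp (h • A) (u t) := by
  have hshift : ∀ s, HasDerivAt (fun s => u (t + s)) (A (u (t + s))) s := fun s =>
    (hu (t + s)).comp_const_add t s
  have hexp : ∀ s, HasDerivAt (fun s : ℝ => exp (s • A) (u t)) (A (exp (s • A) (u t))) s :=
    fun s => by
      simpa using (hasDerivAt_exp_smul_const' A s).clm_apply (hasDerivAt_const s (u t))
  have hflow := ODE_solution_unique_univ (v := fun _ => A) (s := fun _ => Set.univ) (t₀ := 0)
    (fun _ => A.lipschitz.lipschitzOnWith) (fun s => ⟨hshift s, trivial⟩)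
    (fun s => ⟨hexp s, trivial⟩) (by simp)
  exact congrFun hflow h

theorem pow_add_div_factorial_le {r : ℝ} (hr : 0 ≤ r) (m n : ℕ) :
    r ^ (m + n) / (m + n)! ≤ r ^ m / m ! * (r ^ n / n !) := by
  have hfac : (m ! * n ! : ℝ) ≤ (m + n)! := by
    exact_mod_cast Nat.le_of_dvd (factorial_pos _) (factorial_mul_factorial_dvd_factorial_add m n)
  calc r ^ (m + n) / (m + n)! ≤ r ^ (m + n) / (m ! * n !) :=
        div_le_div_of_nonneg_left (by positivity) (by positivity) hfac
    _ = r ^ m / m ! * (r ^ n / n !) := by rw [pow_add, mul_div_mul_comm]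

/-- At least one term is subtracted, since `‖x ^ 0‖ = ‖1‖` may exceed `1` in a `NormedRing`. -/
theorem norm_exp_sub_sum_range_le {𝕂 𝔸 : Type*} [RCLike 𝕂] [NormedRing 𝔸] [NormedAlgebra 𝕂 𝔸]
    [CompleteSpace 𝔸] (x : 𝔸) (n : ℕ) :
    ‖exp x - ∑ k ∈ Finset.range (n + 1), (k !⁻¹ : 𝕂) • x ^ k‖ ≤
      ‖x‖ ^ (n + 1) / (n + 1)! * Real.exp ‖x‖ := by
  rw [congrFun (exp_eq_tsum 𝕂) x, ← (expSeries_summable' (𝕂 := 𝕂) x).sum_add_tsum_nat_add (n + 1),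
    add_sub_cancel_left, Real.exp_eq_exp_ℝ]
  refine tsum_of_norm_bounded ((expSeries_div_hasSum_exp ‖x‖).mul_left _) fun k => ?_
  calc ‖((k + (n + 1))!⁻¹ : 𝕂) • x ^ (k + (n + 1))‖
      ≤ ‖x‖ ^ (n + 1 + k) / (n + 1 + k)! := by
        rw [norm_smul, norm_inv, RCLike.norm_natCast, inv_mul_eq_div, add_comm k]
        gcongr
        exact norm_pow_le' x (by omega)
    _ ≤ ‖x‖ ^ (n + 1) / (n + 1)! * (‖x‖ ^ k / k !) := pow_add_div_factorial_le (norm_nonneg x) _ _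

theorem taylor_step_error_linear_ode
    {E : Type*} [NormedAddCommGroup E] [NormedSpace ℝ E] [CompleteSpace E]
    (A : E →L[ℝ] E) (u : ℝ → E) (hu : Differentiable ℝ u)
    (hode : ∀ t : ℝ, deriv u t = A (u t)) :
    ∀ (p : ℕ) (t h : ℝ),
      ‖u (t + h) - ∑ k ∈ Finset.range (p + 1),
          (h ^ k / (Nat.factorial k : ℝ)) • (A ^ k) (u t)‖ ≤
        ‖u t‖ * ‖A‖ ^ (p + 1) * |h| ^ (p + 1) / (Nat.factorial (p + 1) : ℝ) *
          Real.exp (|h| * ‖A‖) := by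
  intro p t h
  have hsol : ∀ s, HasDerivAt u (A (u s)) s := fun s => hode s ▸ (hu s).hasDerivAt
  have htaylor : ∑ k ∈ Finset.range (p + 1), (h ^ k / (k ! : ℝ)) • (A ^ k) (u t) =
      (∑ k ∈ Finset.range (p + 1), (k !⁻¹ : ℝ) • (h • A) ^ k) (u t) := by
    simp only [sum_apply, smul_apply, smul_pow, smul_smul, div_eq_inv_mul]
  rw [apply_add_eq_exp_smul_apply_of_hasDerivAt A hsol, htaylor, ← sub_apply]
  calc _ ≤ ‖exp (h • A) - ∑ k ∈ Finset.range (p + 1), (k !⁻¹ : ℝ) • (h • A) ^ k‖ * ‖u t‖ :=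
        ContinuousLinearMap.le_opNorm _ _
    _ ≤ ‖h • A‖ ^ (p + 1) / (p + 1)! * Real.exp ‖h • A‖ * ‖u t‖ := by
        gcongr
        exact norm_exp_sub_sum_range_le _ _
    _ = _ := by
        rw [norm_smul, Real.norm_eq_abs, mul_pow]
        ring
end

section
/- Let E and F be complete real normed vector spaces, let h : ℝ → E and g : E → F both be three times continuously differentiable (ContDiff of order 3). Then for every t ∈ ℝ, the third iterated derivative of g ∘ h satisfies (g ∘ h)‴(t) = D³g(h(t))[h′(t), h′(t), h′(t)] + 3·D²g(h(t))[h″(t), h′(t)] + Dg(h(t))[h‴(t)]. -/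
/-! Differentiate `g ∘ h` three times by combining the chain rule with the product rule for
applications of continuous linear maps: each differentiation of a term `Dᵏg(h s)[v₁ s, …]`
produces `Dᵏ⁺¹g(h s)[h′ s, v₁ s, …]` plus one term per differentiated argument. The third
derivative so obtained contains `D²g(h t)[h′ t, h″ t]` and `D²g(h t)[h″ t, h′ t]`, which
merge into `3 • D²g(h t)[h″ t, h′ t]` by the symmetry of the second derivative of a `C²` map. -/

section

variable {𝕜 E F G H : Type*} [NontriviallyNormedField 𝕜]
  [NormedAddCommGroup E] [NormedSpace 𝕜 E] [NormedAddCommGroup F] [NormedSpace 𝕜 F]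
  [NormedAddCommGroup G] [NormedSpace 𝕜 G] [NormedAddCommGroup H] [NormedSpace 𝕜 H]

theorem iteratedFDeriv_three_apply (f : E → F) (z : E) (m : Fin 3 → E) :
    iteratedFDeriv 𝕜 3 f z m = fderiv 𝕜 (fderiv 𝕜 (fderiv 𝕜 f)) z (m 0) (m 1) (m 2) := by
  rw [iteratedFDeriv_succ_apply_right, iteratedFDeriv_two_apply]
  rfl

theorem ContDiff.hasDerivAt_iteratedDeriv {n : WithTop ℕ∞} {f : 𝕜 → E} (hf : ContDiff 𝕜 n f)
    {m : ℕ} (hm : m < n) (x : 𝕜) :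
    HasDerivAt (iteratedDeriv m f) (iteratedDeriv (m + 1) f x) x := by
  rw [iteratedDeriv_succ]
  exact (hf.differentiable_iteratedDeriv m hm x).hasDerivAt

theorem HasFDerivAt.hasDerivAt_comp_clm_apply {A : E → H →L[𝕜] G} {A' : E →L[𝕜] H →L[𝕜] G}
    {h : 𝕜 → E} {v : 𝕜 → H} {h' : E} {v' : H} {s : 𝕜}
    (hA : HasFDerivAt A A' (h s)) (hh : HasDerivAt h h' s) (hv : HasDerivAt v v' s) :
    HasDerivAt (fun s ↦ A (h s) (v s)) (A' h' (v s) + A (h s) v') s :=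
  (hA.comp_hasDerivAt s hh).clm_apply hv

theorem deriv_deriv_comp {g : E → F} {h : 𝕜 → E} (hg : ContDiff 𝕜 2 g) (hh : ContDiff 𝕜 2 h) :
    deriv (deriv (g ∘ h)) = fun s ↦
      fderiv 𝕜 (fderiv 𝕜 g) (h s) (deriv h s) (deriv h s) +
        fderiv 𝕜 g (h s) (iteratedDeriv 2 h s) := by
  have hDg : Differentiable 𝕜 (fderiv 𝕜 g) :=
    (hg.fderiv_right (m := 1) le_rfl).differentiable one_ne_zero
  have hderiv : deriv (g ∘ h) = fun s ↦ fderiv 𝕜 g (h s) (deriv h s) := funext fun s ↦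
    fderiv_comp_deriv s (hg.differentiable two_ne_zero _) (hh.differentiable two_ne_zero _)
  rw [hderiv]
  funext s
  have hh₀ := hh.hasDerivAt_iteratedDeriv (m := 0) (by norm_num) s
  have hh₁ := hh.hasDerivAt_iteratedDeriv (m := 1) (by norm_num) s
  simp only [Nat.reduceAdd, iteratedDeriv_zero, iteratedDeriv_one] at hh₀ hh₁
  exact ((hDg (h s)).hasFDerivAt.hasDerivAt_comp_clm_apply hh₀ hh₁).deriv

end

theorem faa_di_bruno_third_order_general
    {E F : Type*} [NormedAddCommGroup E] [NormedSpace ℝ E]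
    [NormedAddCommGroup F] [NormedSpace ℝ F]
    (h : ℝ → E) (g : E → F)
    (hh : ContDiff ℝ 3 h) (hg : ContDiff ℝ 3 g) :
    ∀ t : ℝ,
      iteratedDeriv 3 (g ∘ h) t =
        iteratedFDeriv ℝ 3 g (h t) ![deriv h t, deriv h t, deriv h t] +
          (3 : ℝ) • iteratedFDeriv ℝ 2 g (h t) ![iteratedDeriv 2 h t, deriv h t] +
          fderiv ℝ g (h t) (iteratedDeriv 3 h t) := by
  intro t
  have hDg : ContDiff ℝ 2 (fderiv ℝ g) := hg.fderiv_right (m := 2) le_rfl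
  have hD2g : ContDiff ℝ 1 (fderiv ℝ (fderiv ℝ g)) := hDg.fderiv_right (m := 1) le_rfl
  have hh₀ := hh.hasDerivAt_iteratedDeriv (m := 0) (by norm_num) t
  have hh₁ := hh.hasDerivAt_iteratedDeriv (m := 1) (by norm_num) t
  have hh₂ := hh.hasDerivAt_iteratedDeriv (m := 2) (by norm_num) t
  simp only [Nat.reduceAdd, iteratedDeriv_zero, iteratedDeriv_one] at hh₀ hh₁ hh₂
  have hthird :=
    (((hD2g.differentiable one_ne_zero _).hasFDerivAt.hasDerivAt_comp_clm_apply hh₀ hh₁).clm_apply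
      hh₁).fun_add ((hDg.differentiable two_ne_zero _).hasFDerivAt.hasDerivAt_comp_clm_apply hh₀ hh₂)
  have hsymm := hg.contDiffAt.isSymmSndFDerivAt (x := h t) (by norm_num) (deriv h t)
    (iteratedDeriv 2 h t)
  rw [iteratedDeriv_succ, iteratedDeriv_succ, iteratedDeriv_one,
    deriv_deriv_comp (hg.of_le (by norm_num)) (hh.of_le (by norm_num)), hthird.deriv,
    iteratedFDeriv_three_apply, iteratedFDeriv_two_apply]
  simp only [Matrix.cons_val_zero, Matrix.cons_val_one, Matrix.cons_val_two, Matrix.head_cons,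
    Matrix.tail_cons, add_apply]
  rw [hsymm]
  module

theorem faa_di_bruno_third_order
    {E F : Type*} [NormedAddCommGroup E] [NormedSpace ℝ E] [CompleteSpace E]
    [NormedAddCommGroup F] [NormedSpace ℝ F] [CompleteSpace F]
    (h : ℝ → E) (g : E → F)
    (hh : ContDiff ℝ 3 h) (hg : ContDiff ℝ 3 g) :
    ∀ t : ℝ,
      iteratedDeriv 3 (g ∘ h) t =
        iteratedFDeriv ℝ 3 g (h t) ![deriv h t, deriv h t, deriv h t] +
          (3 : ℝ) • iteratedFDeriv ℝ 2 g (h t) ![iteratedDeriv 2 h t, deriv h t] +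
          fderiv ℝ g (h t) (iteratedDeriv 3 h t) :=
  faa_di_bruno_third_order_general h g hh hg
end

section
/- Let E and F be complete real normed vector spaces, let p ∈ ℕ, and let f : E → F be p-times continuously differentiable (ContDiff of order p). Then for every x, v ∈ E, the p-th order directional derivative of f at x along v equals the p-th one-dimensional derivative of the curve s ↦ f(x + s·v) at s = 0; that is, the p-th iterated Fréchet derivative of f at x applied to the constant tuple (v, …, v) equals iteratedDeriv p (fun s ↦ f(x + s·v)) 0. -/
theorem directional_deriv_aux
    {E F : Type*} [NormedAddCommGroup E] [NormedSpace ℝ E]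
    [NormedAddCommGroup F] [NormedSpace ℝ F]
    (p : ℕ) (f : E → F) (hf : ContDiff ℝ (p : ℕ∞) f) :
    ∀ n : ℕ, n ≤ p → ∀ x v : E, ∀ t : ℝ,
      iteratedDeriv n (fun s : ℝ => f (x + s • v)) t =
        iteratedFDeriv ℝ n f (x + t • v) (fun _ => v) := by
  intro n
  induction n with
  | zero => intro _ x v t; simp
  | succ n IH =>
    intro hn x v t
    have hn' : n ≤ p := Nat.le_of_succ_le hn
    rw [iteratedDeriv_succ]
    have hcongr : deriv (iteratedDeriv n fun s : ℝ => f (x + s • v)) t =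
        deriv (fun s : ℝ => iteratedFDeriv ℝ n f (x + s • v) (fun _ => v)) t := by
      apply Filter.EventuallyEq.deriv_eq
      filter_upwards with s using IH hn' x v s
    rw [hcongr]
    -- chain rule
    set g := iteratedFDeriv ℝ n f with hg
    have hgd : DifferentiableAt ℝ g (x + t • v) :=
      (hf.differentiable_iteratedFDeriv
        (by exact_mod_cast Nat.lt_of_succ_le hn)).differentiableAt
    have hc : HasDerivAt (fun s : ℝ => x + s • v) v t := by
      simpa using ((hasDerivAt_id t).smul_const v).const_add x
    have h1 : HasDerivAt (fun s : ℝ => g (x + s • v)) (fderiv ℝ g (x + t • v) v) t :=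
      hgd.hasFDerivAt.comp_hasDerivAt t hc
    have h2 : HasDerivAt (fun s : ℝ => g (x + s • v) (fun _ => v))
        ((fderiv ℝ g (x + t • v) v) (fun _ => v)) t :=
      ((ContinuousMultilinearMap.apply ℝ (fun _ : Fin n => E) F
        (fun _ => v)).hasFDerivAt.comp_hasDerivAt t h1)
    rw [h2.deriv, iteratedFDeriv_succ_apply_left]
    simp only [hg]
    rfl

theorem directional_derivative_eq_deriv_along_line
    {E F : Type*} [NormedAddCommGroup E] [NormedSpace ℝ E] [CompleteSpace E]
    [NormedAddCommGroup F] [NormedSpace ℝ F] [CompleteSpace F]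
    (p : ℕ) (f : E → F) (hf : ContDiff ℝ (p : ℕ∞) f) :
    ∀ x v : E,
      iteratedFDeriv ℝ p f x (fun _ => v) =
        iteratedDeriv p (fun s : ℝ => f (x + s • v)) 0 := by
  intro x v
  rw [directional_deriv_aux p f hf p le_rfl x v 0]
  simp
end
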